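/- Let β > 0, let X be a measurable space with measurable singletons, and let H be an atomless probability measure on X. Let (ω_l)_{l≥1} and (ω'_l)_{l≥1} be GEM(β) stick-breaking weight sequences built from two mutually independent i.i.d. sequences of Beta(1,β) random variables, and let (θ_l)_{l≥1} be an i.i.d. sequence with common law H, independent of both stick sequences. Define the common-atom random probability measures G*_1 = ∑_{l≥1} ω_l δ_{θ_l} and G*_2 = ∑_{l≥1} ω'_l δ_{θ_l}. Then for all measurable sets A, B ⊆ X: E[G*_1(A)·G*_2(B)] = (1/(1+2β))·H(A ∩ B) + (2β/(1+2β))·H(A)·H(B). -/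

import Mathlib

open MeasureTheory ProbabilityTheory

/-- The Beta(1, γ) distribution on [0,1]: density `x ↦ γ (1-x)^(γ-1)` w.r.t. Lebesgue
measure on `[0,1]`. -/
noncomputable def betaOne (γ : ℝ) : Measure ℝ :=
  (volume.restrict (Set.Icc (0:ℝ) 1)).withDensity
    fun x => ENNReal.ofReal (γ * (1 - x) ^ (γ - 1))

/-- Stick-breaking weights (0-indexed): `stick V k = V k * ∏_{i<k} (1 - V i)`. -/
noncomputable def stick {Ω : Type*} (V : ℕ → Ω → ℝ) (k : ℕ) (x : Ω) : ℝ :=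
  V k x * ∏ i ∈ Finset.range k, (1 - V i x)

/-- Index family for joint independence of two stick sequences (ℝ-valued) and the
common atoms (X-valued). -/
abbrev fam3 (X : Type) : ℕ ⊕ ℕ ⊕ ℕ → Type :=
  Sum.elim (fun _ => ℝ) (Sum.elim (fun _ => ℝ) (fun _ => X))

/-- Measurable-space structure on the family. -/
noncomputable def fam3MS (X : Type) [mX : MeasurableSpace X] :
    ∀ i, MeasurableSpace (fam3 X i)
  | .inl _ => inferInstanceAs (MeasurableSpace ℝ)
  | .inr (.inl _) => inferInstanceAs (MeasurableSpace ℝ)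
  | .inr (.inr _) => mX

/-- The combined process of the two stick sequences and the atoms. -/
def fam3F {Ω : Type*} {X : Type} (V V' : ℕ → Ω → ℝ) (θ : ℕ → Ω → X) :
    ∀ i, Ω → fam3 X i
  | .inl k => V k
  | .inr (.inl k) => V' k
  | .inr (.inr l) => θ l

/-!
Expanding both series, `E[G*_1(A) G*_2(B)] = ∑_{l,m} E[ω_l ω'_m 1_A(θ_l) 1_B(θ_m)]`. Each summand
is a product of functions of distinct coordinates of the independent family `(V, V', θ)`, so it
factorizes: `E[ω_l] = c a^l` with `a = E[1 - V] = β/(1+β)` and `c = E[V] = 1 - a`, while the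
atom factor is `H(A ∩ B)` on the diagonal `l = m` and `H(A) H(B)` off it. Summing the two
geometric series gives the weights `c²/(1 - a²) = 1/(1+2β)` and `1 - 1/(1+2β)`. The
interchange of sum and expectation is justified by the summability of these same expectations.
-/

section BetaOne

lemma lintegral_one_sub_rpow_betaOne {β p : ℝ} (hβ : 0 < β) (hp : 0 ≤ p) :
    ∫⁻ y, ENNReal.ofReal ((1 - y) ^ p) ∂betaOne β = ENNReal.ofReal (β / (β + p)) := by
  have hpow : ∀ y ∈ Set.Ico (0 : ℝ) 1, ENNReal.ofReal (β * (1 - y) ^ (β - 1)) *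
      ENNReal.ofReal ((1 - y) ^ p) = ENNReal.ofReal (β * (1 - y) ^ (β - 1 + p)) := by
    intro y hy
    have : 0 < 1 - y := by linarith [hy.2]
    rw [← ENNReal.ofReal_mul (by positivity), mul_assoc, Real.rpow_add this]
  have hint : ∫ y in (0 : ℝ)..1, β * (1 - y) ^ (β - 1 + p) = β / (β + p) := by
    rw [intervalIntegral.integral_const_mul,
      intervalIntegral.integral_comp_sub_left (fun y => y ^ (β - 1 + p)),
      integral_rpow (Or.inl (by linarith))]
    have : β - 1 + p + 1 ≠ 0 := by linarith
    simp only [sub_zero, Real.one_rpow, sub_self, Real.zero_rpow this, one_div]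
    field_simp
    ring_nf
  rw [betaOne, lintegral_withDensity_eq_lintegral_mul _ (by fun_prop) (by fun_prop)]
  simp only [Pi.mul_apply]
  rw [setLIntegral_congr Ico_ae_eq_Icc.symm, setLIntegral_congr_fun measurableSet_Ico hpow,
    setLIntegral_congr Ico_ae_eq_Icc, ← hint, intervalIntegral.integral_of_le zero_le_one,
    ← integral_Icc_eq_integral_Ioc, ofReal_integral_eq_lintegral_ofReal]
  · have h := ((intervalIntegral.intervalIntegrable_rpow' (a := 1 - 1) (b := 1 - 0)
      (show -1 < β - 1 + p by linarith)).comp_sub_left 1).const_mul β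
    exact (intervalIntegrable_iff_integrableOn_Icc_of_le zero_le_one).mp (by simpa using h.symm)
  · filter_upwards [ae_restrict_mem measurableSet_Icc] with y hy
    exact mul_nonneg hβ.le (Real.rpow_nonneg (by linarith [hy.2]) _)

lemma isProbabilityMeasure_betaOne {β : ℝ} (hβ : 0 < β) : IsProbabilityMeasure (betaOne β) :=
  ⟨by simpa [hβ.ne'] using lintegral_one_sub_rpow_betaOne hβ le_rfl⟩

lemma ae_mem_Icc_betaOne (β : ℝ) : ∀ᵐ y ∂betaOne β, y ∈ Set.Icc (0 : ℝ) 1 :=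
  (withDensity_absolutelyContinuous _ _).ae_le (ae_restrict_mem measurableSet_Icc)

lemma integral_one_sub_betaOne {β : ℝ} (hβ : 0 < β) :
    ∫ y, (1 - y) ∂betaOne β = β / (1 + β) := by
  have hnonneg : 0 ≤ᵐ[betaOne β] fun y => 1 - y := by
    filter_upwards [ae_mem_Icc_betaOne β] with y hy
    exact sub_nonneg.mpr hy.2
  have h := lintegral_one_sub_rpow_betaOne hβ zero_le_one
  simp only [Real.rpow_one] at h
  rw [integral_eq_lintegral_of_nonneg_ae hnonneg (by fun_prop), h,
    ENNReal.toReal_ofReal (by positivity), add_comm]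

lemma integral_id_betaOne {β : ℝ} (hβ : 0 < β) : ∫ y, y ∂betaOne β = 1 / (1 + β) := by
  have := isProbabilityMeasure_betaOne hβ
  have hint : Integrable (fun y : ℝ => 1 - y) (betaOne β) := by
    refine Integrable.of_bound (by fun_prop) 1 ?_
    filter_upwards [ae_mem_Icc_betaOne β] with y hy
    rw [Real.norm_eq_abs, abs_le]
    constructor <;> linarith [hy.1, hy.2]
  have h := integral_sub (integrable_const 1) hint
  simp only [sub_sub_cancel, integral_const, probReal_univ, smul_eq_mul, one_mul,
    integral_one_sub_betaOne hβ] at h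
  rw [h]
  field_simp
  ring

variable {Ω : Type*} [MeasurableSpace Ω] {μ : Measure Ω} {β : ℝ} {V : Ω → ℝ}

lemma integral_of_map_eq_betaOne (hβ : 0 < β) (hV : AEMeasurable V μ)
    (hlaw : μ.map V = betaOne β) : ∫ x, V x ∂μ = 1 / (1 + β) := by
  rw [← integral_id_betaOne hβ, ← hlaw,
    integral_map (f := fun y => y) hV aestronglyMeasurable_id]

lemma integral_one_sub_of_map_eq_betaOne (hβ : 0 < β) (hV : AEMeasurable V μ)
    (hlaw : μ.map V = betaOne β) : ∫ x, (1 - V x) ∂μ = β / (1 + β) := by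
  rw [← integral_one_sub_betaOne hβ, ← hlaw, integral_map hV (by fun_prop)]

lemma ae_forall_mem_Icc_of_map_eq_betaOne {V : ℕ → Ω → ℝ} (hV : ∀ i, Measurable (V i))
    (hlaw : ∀ i, μ.map (V i) = betaOne β) : ∀ᵐ x ∂μ, ∀ i, V i x ∈ Set.Icc (0 : ℝ) 1 :=
  ae_all_iff.mpr fun i => ae_of_ae_map (hV i).aemeasurable ((hlaw i) ▸ ae_mem_Icc_betaOne β)

end BetaOne

lemma Finset.prod_range_succ_ite_lt {M : Type*} [CommMonoid M] (f g : ℕ → M) (l : ℕ) :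
    ∏ k ∈ Finset.range (l + 1), (if k < l then f k else g k)
      = (∏ k ∈ Finset.range l, f k) * g l := by
  rw [Finset.prod_range_succ, if_neg (lt_irrefl l)]
  exact congrArg (· * g l) (Finset.prod_congr rfl fun k hk => if_pos (Finset.mem_range.mp hk))

section Stick

variable {Ω : Type*} {V : ℕ → Ω → ℝ} {x : Ω}

def stickFactor (l k : ℕ) (v : ℝ) : ℝ := if k < l then 1 - v else v

lemma measurable_stickFactor (l k : ℕ) : Measurable (stickFactor l k) := by
  unfold stickFactor
  split_ifs <;> fun_prop

lemma stick_eq_prod_stickFactor (l : ℕ) :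
    stick V l x = ∏ k ∈ Finset.range (l + 1), stickFactor l k (V k x) := by
  rw [stick, mul_comm]
  exact (Finset.prod_range_succ_ite_lt (fun k => 1 - V k x) (fun k => V k x) l).symm

lemma measurable_stick [MeasurableSpace Ω] (hV : ∀ k, Measurable (V k)) (l : ℕ) :
    Measurable (stick V l) := by
  unfold stick
  fun_prop

lemma sum_range_stick (n : ℕ) :
    ∑ l ∈ Finset.range n, stick V l x = 1 - ∏ i ∈ Finset.range n, (1 - V i x) := by
  induction n with
  | zero => simp
  | succ n ih => rw [Finset.sum_range_succ, Finset.prod_range_succ, ih, stick]; ring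

lemma prod_one_sub_mem_Icc (hV : ∀ i, V i x ∈ Set.Icc (0 : ℝ) 1) (n : ℕ) :
    ∏ i ∈ Finset.range n, (1 - V i x) ∈ Set.Icc (0 : ℝ) 1 :=
  ⟨Finset.prod_nonneg fun i _ => sub_nonneg.mpr (hV i).2,
    Finset.prod_le_one (fun i _ => sub_nonneg.mpr (hV i).2) fun i _ => sub_le_self 1 (hV i).1⟩

lemma stick_mem_Icc (hV : ∀ i, V i x ∈ Set.Icc (0 : ℝ) 1) (l : ℕ) :
    stick V l x ∈ Set.Icc (0 : ℝ) 1 :=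
  have h := prod_one_sub_mem_Icc hV l
  ⟨mul_nonneg (hV l).1 h.1, mul_le_one₀ (hV l).2 h.1 h.2⟩

lemma summable_stick (hV : ∀ i, V i x ∈ Set.Icc (0 : ℝ) 1) : Summable (stick V · x) :=
  summable_of_sum_range_le (fun l => (stick_mem_Icc hV l).1) fun n => by
    rw [sum_range_stick]
    exact sub_le_self 1 (prod_one_sub_mem_Icc hV n).1

lemma indicator_stick_mem_Icc {X : Type*} (hV : ∀ i, V i x ∈ Set.Icc (0 : ℝ) 1) (A : Set X)
    (t : X) (l : ℕ) : A.indicator (fun _ => stick V l x) t ∈ Set.Icc (0 : ℝ) 1 := by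
  by_cases ht : t ∈ A
  · simpa [ht] using stick_mem_Icc hV l
  · simp [ht]

lemma summable_norm_indicator_stick {X : Type*} (hV : ∀ i, V i x ∈ Set.Icc (0 : ℝ) 1)
    (A : Set X) (t : ℕ → X) : Summable fun l => ‖A.indicator (fun _ => stick V l x) (t l)‖ :=
  (summable_stick hV).of_nonneg_of_le (fun _ => norm_nonneg _) fun l =>
    (norm_indicator_le_norm_self _ _).trans_eq (Real.norm_of_nonneg (stick_mem_Icc hV l).1)

lemma prod_integral_stickFactor [MeasurableSpace Ω] {μ : Measure Ω} {β : ℝ} (hβ : 0 < β)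
    (hmV : ∀ l, Measurable (V l)) (hlawV : ∀ l, μ.map (V l) = betaOne β) (l : ℕ) :
    ∏ k ∈ Finset.range (l + 1), ∫ x, stickFactor l k (V k x) ∂μ
      = 1 / (1 + β) * (β / (1 + β)) ^ l := by
  have hmean : ∀ k, ∫ x, stickFactor l k (V k x) ∂μ
      = if k < l then β / (1 + β) else 1 / (1 + β) := by
    intro k
    unfold stickFactor
    split_ifs
    · exact integral_one_sub_of_map_eq_betaOne hβ (hmV k).aemeasurable (hlawV k)
    · exact integral_of_map_eq_betaOne hβ (hmV k).aemeasurable (hlawV k)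
  simp_rw [hmean]
  rw [Finset.prod_range_succ_ite_lt, Finset.prod_const, Finset.card_range, mul_comm]

end Stick

section CommonAtoms

lemma ProbabilityTheory.iIndepFun.integral_finset_prod_comp {Ω ι : Type*} [MeasurableSpace Ω]
    {μ : Measure Ω} {𝓧 : ι → Type*} {m𝓧 : ∀ i, MeasurableSpace (𝓧 i)} {Y : ∀ i, Ω → 𝓧 i}
    (hY : iIndepFun Y μ) (hYm : ∀ i, Measurable (Y i)) {f : ∀ i, 𝓧 i → ℝ}
    (hf : ∀ i, Measurable (f i)) (s : Finset ι) :
    ∫ ω, ∏ i ∈ s, f i (Y i ω) ∂μ = ∏ i ∈ s, ∫ ω, f i (Y i ω) ∂μ := by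
  have h := iIndepFun.integral_fun_prod_comp (X := fun i : s => Y i) (f := fun i => f i)
    (hY.precomp Subtype.val_injective) (fun i => (hYm i).aemeasurable)
    (fun i => (hf i).aestronglyMeasurable)
  rw [← Finset.prod_coe_sort s, ← h]
  congr with ω
  exact (Finset.prod_coe_sort s fun i => f i (Y i ω)).symm

variable {X : Type}

def fam3Elim (g₁ g₂ : ℕ → ℝ → ℝ) (g₃ : ℕ → X → ℝ) : ∀ i, fam3 X i → ℝ
  | .inl k => g₁ k
  | .inr (.inl k) => g₂ k
  | .inr (.inr j) => g₃ j

noncomputable def atomFactor (A B : Set X) (l m j : ℕ) (t : X) : ℝ :=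
  (if j = l then A.indicator 1 t else 1) * (if j = m then B.indicator 1 t else 1)

lemma prod_atomFactor (A B : Set X) (l m : ℕ) (t : ℕ → X) :
    ∏ j ∈ {l, m}, atomFactor A B l m j (t j) = A.indicator 1 (t l) * B.indicator 1 (t m) := by
  rcases eq_or_ne l m with rfl | hlm
  · simp [atomFactor]
  · rw [Finset.prod_pair hlm]
    simp [atomFactor, hlm, hlm.symm]

variable [MeasurableSpace X]

lemma measurable_fam3Elim {g₁ g₂ : ℕ → ℝ → ℝ} {g₃ : ℕ → X → ℝ}
    (hg₁ : ∀ k, Measurable (g₁ k)) (hg₂ : ∀ k, Measurable (g₂ k))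
    (hg₃ : ∀ j, Measurable (g₃ j)) (i : ℕ ⊕ ℕ ⊕ ℕ) :
    Measurable[fam3MS X i] (fam3Elim g₁ g₂ g₃ i) := by
  rcases i with k | k | j
  exacts [hg₁ k, hg₂ k, hg₃ j]

lemma measurable_atomFactor {A B : Set X} (hA : MeasurableSet A) (hB : MeasurableSet B)
    (l m j : ℕ) : Measurable (atomFactor A B l m j) := by
  unfold atomFactor
  refine Measurable.mul ?_ ?_ <;> split_ifs <;> fun_prop (disch := assumption)

variable {Ω : Type*} [MeasurableSpace Ω] {μ : Measure Ω}
  {V V' : ℕ → Ω → ℝ} {θ : ℕ → Ω → X}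

lemma measurable_fam3F (hmV : ∀ l, Measurable (V l)) (hmV' : ∀ l, Measurable (V' l))
    (hmθ : ∀ l, Measurable (θ l)) (i : ℕ ⊕ ℕ ⊕ ℕ) :
    @Measurable _ _ _ (fam3MS X i) (fam3F V V' θ i) := by
  rcases i with k | k | j
  exacts [hmV k, hmV' k, hmθ j]

lemma integral_prod_mul_prod_mul_prod_of_iIndepFun_fam3F
    (hindep : iIndepFun (m := fam3MS X) (fam3F V V' θ) μ)
    (hmV : ∀ l, Measurable (V l)) (hmV' : ∀ l, Measurable (V' l))
    (hmθ : ∀ l, Measurable (θ l)) {g₁ g₂ : ℕ → ℝ → ℝ} {g₃ : ℕ → X → ℝ}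
    (hg₁ : ∀ k, Measurable (g₁ k)) (hg₂ : ∀ k, Measurable (g₂ k))
    (hg₃ : ∀ j, Measurable (g₃ j)) (s₁ s₂ s₃ : Finset ℕ) :
    ∫ x, (∏ k ∈ s₁, g₁ k (V k x)) * (∏ k ∈ s₂, g₂ k (V' k x)) *
        ∏ j ∈ s₃, g₃ j (θ j x) ∂μ
      = (∏ k ∈ s₁, ∫ x, g₁ k (V k x) ∂μ) * (∏ k ∈ s₂, ∫ x, g₂ k (V' k x) ∂μ) *
        ∏ j ∈ s₃, ∫ x, g₃ j (θ j x) ∂μ := by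
  have h := hindep.integral_finset_prod_comp (measurable_fam3F hmV hmV' hmθ)
    (measurable_fam3Elim hg₁ hg₂ hg₃) (s₁.disjSum (s₂.disjSum s₃))
  simpa only [Finset.prod_disjSum, fam3Elim, fam3F, mul_assoc] using h

lemma integral_indicator_one_comp_of_map_eq {H : Measure X} {ξ : Ω → X} (hξ : Measurable ξ)
    (hlaw : μ.map ξ = H) {S : Set X} (hS : MeasurableSet S) :
    ∫ x, S.indicator 1 (ξ x) ∂μ = (H S).toReal := by
  rw [← integral_map (f := S.indicator (1 : X → ℝ)) hξ.aemeasurable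
    (hlaw ▸ (measurable_one.indicator hS).aestronglyMeasurable), hlaw, integral_indicator_one hS,
    measureReal_def]

lemma prod_integral_atomFactor {H : Measure X} (hmθ : ∀ l, Measurable (θ l))
    (hlawθ : ∀ l, μ.map (θ l) = H) {A B : Set X} (hA : MeasurableSet A)
    (hB : MeasurableSet B) (l m : ℕ) :
    ∏ j ∈ {l, m}, ∫ x, atomFactor A B l m j (θ j x) ∂μ
      = if l = m then (H (A ∩ B)).toReal else (H A).toReal * (H B).toReal := by
  rcases eq_or_ne l m with rfl | hlm
  · simp only [atomFactor, Finset.pair_eq_singleton, Finset.prod_singleton, if_true]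
    rw [← integral_indicator_one_comp_of_map_eq (hmθ l) (hlawθ l) (hA.inter hB),
      Set.inter_indicator_one]
    rfl
  · simp only [Finset.prod_pair hlm, atomFactor, hlm, hlm.symm, if_true, if_false, mul_one,
      one_mul]
    rw [integral_indicator_one_comp_of_map_eq (hmθ l) (hlawθ l) hA,
      integral_indicator_one_comp_of_map_eq (hmθ m) (hlawθ m) hB]

lemma integral_indicator_stick_mul_indicator_stick {H : Measure X} {β : ℝ} (hβ : 0 < β)
    (hmV : ∀ l, Measurable (V l)) (hmV' : ∀ l, Measurable (V' l))
    (hmθ : ∀ l, Measurable (θ l))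
    (hlawV : ∀ l, μ.map (V l) = betaOne β) (hlawV' : ∀ l, μ.map (V' l) = betaOne β)
    (hlawθ : ∀ l, μ.map (θ l) = H)
    (hindep : iIndepFun (m := fam3MS X) (fam3F V V' θ) μ)
    {A B : Set X} (hA : MeasurableSet A) (hB : MeasurableSet B) (l m : ℕ) :
    ∫ x, A.indicator (fun _ => stick V l x) (θ l x) *
        B.indicator (fun _ => stick V' m x) (θ m x) ∂μ
      = 1 / (1 + β) * (β / (1 + β)) ^ l * (1 / (1 + β) * (β / (1 + β)) ^ m) *
        (if l = m then (H (A ∩ B)).toReal else (H A).toReal * (H B).toReal) := by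
  have hfactor : ∀ x, A.indicator (fun _ => stick V l x) (θ l x) *
        B.indicator (fun _ => stick V' m x) (θ m x)
      = (∏ k ∈ Finset.range (l + 1), stickFactor l k (V k x)) *
        (∏ k ∈ Finset.range (m + 1), stickFactor m k (V' k x)) *
        ∏ j ∈ {l, m}, atomFactor A B l m j (θ j x) := by
    intro x
    rw [prod_atomFactor, ← stick_eq_prod_stickFactor, ← stick_eq_prod_stickFactor,
      ← Set.smul_indicator_one_apply, ← Set.smul_indicator_one_apply, smul_eq_mul, smul_eq_mul]
    ring
  simp_rw [hfactor]
  rw [integral_prod_mul_prod_mul_prod_of_iIndepFun_fam3F hindep hmV hmV' hmθ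
      (measurable_stickFactor l) (measurable_stickFactor m) (measurable_atomFactor hA hB l m),
    prod_integral_stickFactor hβ hmV hlawV, prod_integral_stickFactor hβ hmV' hlawV',
    prod_integral_atomFactor hmθ hlawθ hA hB]

lemma integrable_indicator_stick_mul_indicator_stick [IsFiniteMeasure μ]
    (hmV : ∀ l, Measurable (V l)) (hmV' : ∀ l, Measurable (V' l))
    (hmθ : ∀ l, Measurable (θ l)) (hV : ∀ᵐ x ∂μ, ∀ i, V i x ∈ Set.Icc (0 : ℝ) 1)
    (hV' : ∀ᵐ x ∂μ, ∀ i, V' i x ∈ Set.Icc (0 : ℝ) 1) {A B : Set X} (hA : MeasurableSet A)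
    (hB : MeasurableSet B) (l m : ℕ) :
    Integrable (fun x => A.indicator (fun _ => stick V l x) (θ l x) *
      B.indicator (fun _ => stick V' m x) (θ m x)) μ := by
  refine Integrable.of_bound ?_ 1 ?_
  · simp_rw [← Set.smul_indicator_one_apply, smul_eq_mul]
    have := measurable_stick hmV l
    have := measurable_stick hmV' m
    fun_prop (disch := assumption)
  · filter_upwards [hV, hV'] with x hx hx'
    have h := unitInterval.mul_mem (indicator_stick_mem_Icc hx A (θ l x) l)
      (indicator_stick_mem_Icc hx' B (θ m x) m)
    rw [Real.norm_of_nonneg h.1]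
    exact h.2

end CommonAtoms

lemma hasSum_geometric_mul_geometric_ite {a : ℝ} (ha₀ : 0 ≤ a) (ha₁ : a < 1) (r q : ℝ) :
    HasSum (fun p : ℕ × ℕ =>
        (1 - a) * a ^ p.1 * ((1 - a) * a ^ p.2) * (if p.1 = p.2 then r else q))
      ((1 - a) / (1 + a) * r + 2 * a / (1 + a) * q) := by
  have h1a : 0 < 1 - a := sub_pos.mpr ha₁
  have h1a' : 0 < 1 + a := by linarith
  have hgeom : HasSum (fun l : ℕ => (1 - a) * a ^ l) 1 := by
    simpa [mul_inv_cancel₀ h1a.ne'] using (hasSum_geometric_of_lt_one ha₀ ha₁).mul_left (1 - a)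
  have hpairs : HasSum (fun p : ℕ × ℕ => (1 - a) * a ^ p.1 * ((1 - a) * a ^ p.2)) 1 := by
    simpa using hgeom.mul hgeom (hgeom.summable.mul_of_nonneg hgeom.summable
      (fun l => by positivity) (fun l => by positivity))
  have hdiag : HasSum (fun p : ℕ × ℕ =>
      if p.1 = p.2 then (1 - a) * a ^ p.1 * ((1 - a) * a ^ p.2) else 0) ((1 - a) / (1 + a)) := by
    have hinj : Function.Injective fun l : ℕ => (l, l) := fun l l' h => congrArg Prod.fst h
    refine (hinj.hasSum_iff ?_).mp ?_
    · rintro ⟨l, m⟩ hlm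
      exact if_neg fun h => hlm ⟨l, by simp_all⟩
    · have hfun : (fun p : ℕ × ℕ =>
            if p.1 = p.2 then (1 - a) * a ^ p.1 * ((1 - a) * a ^ p.2) else 0) ∘ (fun l => (l, l))
          = fun l => (1 - a) ^ 2 * (a ^ 2) ^ l := by
        funext l
        simp only [Function.comp_apply, if_true]
        ring
      have hval : (1 - a) / (1 + a) = (1 - a) ^ 2 * (1 - a ^ 2)⁻¹ := by
        have : 1 - a ^ 2 ≠ 0 := by nlinarith
        field_simp
        ring
      rw [hfun, hval]
      exact (hasSum_geometric_of_lt_one (sq_nonneg a) (by nlinarith)).mul_left _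
  have hfun : (fun p : ℕ × ℕ =>
        (1 - a) * a ^ p.1 * ((1 - a) * a ^ p.2) * (if p.1 = p.2 then r else q))
      = fun p => q * ((1 - a) * a ^ p.1 * ((1 - a) * a ^ p.2))
        + (r - q) * (if p.1 = p.2 then (1 - a) * a ^ p.1 * ((1 - a) * a ^ p.2) else 0) := by
    funext p
    split_ifs <;> ring
  have hval : (1 - a) / (1 + a) * r + 2 * a / (1 + a) * q
      = q * 1 + (r - q) * ((1 - a) / (1 + a)) := by
    field_simp
    ring
  rw [hfun, hval]
  exact (hpairs.mul_left q).add (hdiag.mul_left (r - q))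

theorem cam_cross_moment_general {Ω : Type*} {X : Type} [MeasurableSpace Ω] [MeasurableSpace X]
    (μ : Measure Ω) [IsProbabilityMeasure μ]
    (H : Measure X)
    (β : ℝ) (hβ : 0 < β) (V V' : ℕ → Ω → ℝ) (θ : ℕ → Ω → X)
    (hmV : ∀ l, Measurable (V l)) (hmV' : ∀ l, Measurable (V' l))
    (hmθ : ∀ l, Measurable (θ l))
    (hlawV : ∀ l, μ.map (V l) = betaOne β) (hlawV' : ∀ l, μ.map (V' l) = betaOne β)
    (hlawθ : ∀ l, μ.map (θ l) = H)
    (hindep : iIndepFun (m := fam3MS X) (fam3F V V' θ) μ)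
    (A B : Set X) (hA : MeasurableSet A) (hB : MeasurableSet B) :
    ∫ x, (∑' l : ℕ, A.indicator (fun _ => stick V l x) (θ l x)) *
        (∑' l : ℕ, B.indicator (fun _ => stick V' l x) (θ l x)) ∂μ
      = 1 / (1 + 2 * β) * (H (A ∩ B)).toReal
        + 2 * β / (1 + 2 * β) * ((H A).toReal * (H B).toReal) := by
  have hVI := ae_forall_mem_Icc_of_map_eq_betaOne hmV hlawV
  have hV'I := ae_forall_mem_Icc_of_map_eq_betaOne hmV' hlawV'
  set F : ℕ × ℕ → Ω → ℝ := fun p x => A.indicator (fun _ => stick V p.1 x) (θ p.1 x) *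
    B.indicator (fun _ => stick V' p.2 x) (θ p.2 x)
  have hF_nonneg : ∀ p, ∀ᵐ x ∂μ, 0 ≤ F p x := fun p => by
    filter_upwards [hVI, hV'I] with x hx hx'
    exact mul_nonneg (indicator_stick_mem_Icc hx A _ _).1 (indicator_stick_mem_Icc hx' B _ _).1
  have hF_int : ∀ p, Integrable (F p) μ := fun p =>
    integrable_indicator_stick_mul_indicator_stick hmV hmV' hmθ hVI hV'I hA hB p.1 p.2
  have hF_integral : ∀ p : ℕ × ℕ, ∫ x, F p x ∂μ = (1 - β / (1 + β)) * (β / (1 + β)) ^ p.1 *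
      ((1 - β / (1 + β)) * (β / (1 + β)) ^ p.2) *
      (if p.1 = p.2 then (H (A ∩ B)).toReal else (H A).toReal * (H B).toReal) := fun p => by
    rw [show 1 - β / (1 + β) = 1 / (1 + β) by field_simp; ring]
    exact integral_indicator_stick_mul_indicator_stick hβ hmV hmV' hmθ hlawV hlawV' hlawθ
      hindep hA hB p.1 p.2
  have hsum := hasSum_geometric_mul_geometric_ite (a := β / (1 + β)) (by positivity)
    ((div_lt_one (by positivity)).mpr (by linarith)) (H (A ∩ B)).toReal
    ((H A).toReal * (H B).toReal)
  have hF_sum : Summable fun p => ∫ x, ‖F p x‖ ∂μ := hsum.summable.congr fun p => by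
    rw [← hF_integral, integral_congr_ae]
    filter_upwards [hF_nonneg p] with x hx
    exact (Real.norm_of_nonneg hx).symm
  calc _ = ∫ x, ∑' p, F p x ∂μ := integral_congr_ae <| by
          filter_upwards [hVI, hV'I] with x hx hx'
          exact tsum_mul_tsum_of_summable_norm (summable_norm_indicator_stick hx A _)
            (summable_norm_indicator_stick hx' B _)
    _ = _ := by
      rw [← integral_tsum_of_summable_integral_norm hF_int hF_sum, tsum_congr hF_integral,
        hsum.tsum_eq]
      have : 1 + 2 * β ≠ 0 := by linarith
      field_simp
      ring

/-- for two common-atom random measures `G*_1 = ∑_l ω_l δ_{θ_l}` and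
`G*_2 = ∑_l ω'_l δ_{θ_l}` with independent GEM(β) weights and shared i.i.d. atoms with
atomless law H (all jointly independent):
`E[G*_1(A) G*_2(B)] = (1/(1+2β)) H(A∩B) + (2β/(1+2β)) H(A)H(B)`. -/
theorem cam_cross_moment {Ω : Type*} {X : Type} [MeasurableSpace Ω] [MeasurableSpace X]
    [MeasurableSingletonClass X]
    (μ : Measure Ω) [IsProbabilityMeasure μ]
    (H : Measure X) [IsProbabilityMeasure H] (hH : ∀ p : X, H {p} = 0)
    (β : ℝ) (hβ : 0 < β) (V V' : ℕ → Ω → ℝ) (θ : ℕ → Ω → X)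
    (hmV : ∀ l, Measurable (V l)) (hmV' : ∀ l, Measurable (V' l))
    (hmθ : ∀ l, Measurable (θ l))
    (hlawV : ∀ l, μ.map (V l) = betaOne β) (hlawV' : ∀ l, μ.map (V' l) = betaOne β)
    (hlawθ : ∀ l, μ.map (θ l) = H)
    (hindep : iIndepFun (m := fam3MS X) (fam3F V V' θ) μ)
    (A B : Set X) (hA : MeasurableSet A) (hB : MeasurableSet B) :
    ∫ x, (∑' l : ℕ, A.indicator (fun _ => stick V l x) (θ l x)) *
        (∑' l : ℕ, B.indicator (fun _ => stick V' l x) (θ l x)) ∂μ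
      = 1 / (1 + 2 * β) * (H (A ∩ B)).toReal
        + 2 * β / (1 + 2 * β) * ((H A).toReal * (H B).toReal) :=
  cam_cross_moment_general μ H β hβ V V' θ hmV hmV' hmθ hlawV hlawV' hlawθ hindep A B hA hB
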